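/- arXiv:2410.07958 — 2 statements merged into one kernel-verified Lean document; each statement's English description precedes it below -/
import Mathlib

section
/- Let σ_1, σ_2 ∈ R^{d×q} and p_1 ∈ (0,1). If there exists an orthogonal matrix O ∈ R^{q×q} with σσ* ≤ (p_1 σ_1 + (1−p_1) σ_2 O)(p_1 σ_1 + (1−p_1) σ_2 O)*, then there exists a positive semi-definite Γ ∈ R^{2d×2d} with diagonal blocks σ_1σ_1* and σ_2σ_2* such that σσ* ≤ (p_1 I_d, (1−p_1) I_d) Γ (p_1 I_d, (1−p_1) I_d)*. -/
open MeasureTheory ProbabilityTheory Matrix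

noncomputable def stdGaussianPi (d : ℕ) : Measure (Fin d → ℝ) :=
  Measure.pi fun _ => gaussianReal 0 1

/-- The square root of a positive semidefinite matrix, as defined in the older Mathlib. -/
noncomputable def Matrix.PosSemidef.sqrt {n : Type*} [Fintype n] [DecidableEq n]
    {A : Matrix n n ℝ} (hA : A.PosSemidef) : Matrix n n ℝ :=
  hA.1.eigenvectorUnitary.1 * diagonal ((↑) ∘ (√·) ∘ hA.1.eigenvalues) *
    (star hA.1.eigenvectorUnitary : Matrix n n ℝ)

/-- The Gaussian law `N_d(m, S)` on `ℝ^d`, defined as the image of the standard Gaussian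
by `z ↦ m + S^{1/2} z`. -/
noncomputable def gaussianPi {d : ℕ} (m : Fin d → ℝ) {S : Matrix (Fin d) (Fin d) ℝ}
    (hS : S.PosSemidef) : Measure (Fin d → ℝ) :=
  Measure.map (fun z => m + hS.sqrt.mulVec z) (stdGaussianPi d)

/-- Convex order between measures: `μ ≤_cx ν`. -/
def ConvexOrder {E : Type*} [NormedAddCommGroup E] [NormedSpace ℝ E] [MeasurableSpace E]
    (μ ν : Measure E) : Prop :=
  ∀ φ : E → ℝ, ConvexOn ℝ Set.univ φ → Integrable φ μ → Integrable φ ν →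
    ∫ x, φ x ∂μ ≤ ∫ x, φ x ∂ν

/-! Take `Γ = B Bᵀ` with `B = [σ₁; σ₂ O]`. Orthogonality of `O` makes the second diagonal block
`σ₂ O Oᵀ σ₂ᵀ = σ₂ σ₂ᵀ`, and `(p₁ I, (1 - p₁) I) B = p₁ σ₁ + (1 - p₁) σ₂ O`, so the compressed
matrix `(p₁ I, (1 - p₁) I) Γ (p₁ I, (1 - p₁) I)ᵀ` is exactly the one dominating `σ σᵀ`. -/

namespace Matrix

variable {m m₁ m₂ n : Type*} {R : Type*}

theorem posSemidef_self_mul_transpose [Fintype m] [Fintype n] [CommRing R] [PartialOrder R]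
    [StarRing R] [StarOrderedRing R] [TrivialStar R] (A : Matrix m n R) : (A * Aᵀ).PosSemidef := by
  simpa only [conjTranspose_eq_transpose_of_trivial] using posSemidef_self_mul_conjTranspose A

variable [CommRing R]

theorem toBlocks₁₁_fromRows_mul_transpose [Fintype n] (A₁ : Matrix m₁ n R)
    (A₂ : Matrix m₂ n R) :
    (fromRows A₁ A₂ * (fromRows A₁ A₂)ᵀ).toBlocks₁₁ = A₁ * A₁ᵀ := by
  rw [transpose_fromRows, fromRows_mul_fromCols, toBlocks_fromBlocks₁₁]

theorem toBlocks₂₂_fromRows_mul_transpose [Fintype n] (A₁ : Matrix m₁ n R)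
    (A₂ : Matrix m₂ n R) :
    (fromRows A₁ A₂ * (fromRows A₁ A₂)ᵀ).toBlocks₂₂ = A₂ * A₂ᵀ := by
  rw [transpose_fromRows, fromRows_mul_fromCols, toBlocks_fromBlocks₂₂]

theorem mul_mul_transpose_of_mul_transpose_eq_one [Fintype n] [DecidableEq n]
    {O : Matrix n n R} (hO : O * Oᵀ = 1) (A : Matrix m n R) : A * O * (A * O)ᵀ = A * Aᵀ := by
  rw [transpose_mul, Matrix.mul_assoc, ← Matrix.mul_assoc O, hO, Matrix.one_mul]

theorem fromCols_smul_one_mul_fromRows [Fintype m] [DecidableEq m] (a b : R)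
    (A₁ A₂ : Matrix m n R) :
    fromCols (a • (1 : Matrix m m R)) (b • (1 : Matrix m m R)) * fromRows A₁ A₂ =
      a • A₁ + b • A₂ := by
  rw [fromCols_mul_fromRows, smul_mul, smul_mul, Matrix.one_mul, Matrix.one_mul]

theorem mul_mul_transpose_mul_transpose [Fintype m₁] [Fintype n] (C : Matrix m m₁ R)
    (A : Matrix m₁ n R) :
    C * (A * Aᵀ) * Cᵀ = C * A * (C * A)ᵀ := by
  rw [transpose_mul, Matrix.mul_assoc, Matrix.mul_assoc, Matrix.mul_assoc]

end Matrix

theorem stmt10_general {d q : ℕ} (σ σ1 σ2 : Matrix (Fin d) (Fin q) ℝ)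
    {p1 : ℝ}
    (h : ∃ O : Matrix (Fin q) (Fin q) ℝ, O * Oᵀ = 1 ∧
      ((p1 • σ1 + (1 - p1) • (σ2 * O)) * (p1 • σ1 + (1 - p1) • (σ2 * O))ᵀ
        - σ * σᵀ).PosSemidef) :
    ∃ Γ : Matrix (Fin d ⊕ Fin d) (Fin d ⊕ Fin d) ℝ, Γ.PosSemidef ∧
      Γ.toBlocks₁₁ = σ1 * σ1ᵀ ∧ Γ.toBlocks₂₂ = σ2 * σ2ᵀ ∧
      (Matrix.fromCols (p1 • (1 : Matrix (Fin d) (Fin d) ℝ))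
          ((1 - p1) • (1 : Matrix (Fin d) (Fin d) ℝ)) * Γ *
        (Matrix.fromCols (p1 • (1 : Matrix (Fin d) (Fin d) ℝ))
          ((1 - p1) • (1 : Matrix (Fin d) (Fin d) ℝ)))ᵀ - σ * σᵀ).PosSemidef := by
  obtain ⟨O, hO, hdom⟩ := h
  refine ⟨fromRows σ1 (σ2 * O) * (fromRows σ1 (σ2 * O))ᵀ, posSemidef_self_mul_transpose _,
    toBlocks₁₁_fromRows_mul_transpose _ _, ?_, ?_⟩
  · rw [toBlocks₂₂_fromRows_mul_transpose, mul_mul_transpose_of_mul_transpose_eq_one hO]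
  · rwa [mul_mul_transpose_mul_transpose, fromCols_smul_one_mul_fromRows]

theorem stmt10 {d q : ℕ} (σ σ1 σ2 : Matrix (Fin d) (Fin q) ℝ)
    {p1 : ℝ} (hp1 : p1 ∈ Set.Ioo (0:ℝ) 1)
    (h : ∃ O : Matrix (Fin q) (Fin q) ℝ, O * Oᵀ = 1 ∧
      ((p1 • σ1 + (1 - p1) • (σ2 * O)) * (p1 • σ1 + (1 - p1) • (σ2 * O))ᵀ
        - σ * σᵀ).PosSemidef) :
    ∃ Γ : Matrix (Fin d ⊕ Fin d) (Fin d ⊕ Fin d) ℝ, Γ.PosSemidef ∧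
      Γ.toBlocks₁₁ = σ1 * σ1ᵀ ∧ Γ.toBlocks₂₂ = σ2 * σ2ᵀ ∧
      (Matrix.fromCols (p1 • (1 : Matrix (Fin d) (Fin d) ℝ))
          ((1 - p1) • (1 : Matrix (Fin d) (Fin d) ℝ)) * Γ *
        (Matrix.fromCols (p1 • (1 : Matrix (Fin d) (Fin d) ℝ))
          ((1 - p1) • (1 : Matrix (Fin d) (Fin d) ℝ)))ᵀ - σ * σᵀ).PosSemidef :=
  stmt10_general σ σ1 σ2 h
end

section
/- Let Z be an integrable R^q-valued random vector with radial distribution, n ≥ 2, σ, σ_1,…,σ_n ∈ R^{d×q}, p_1,…,p_n ∈ (0,1) with Σ_i p_i = 1. If there exist orthogonal matrices O_1,…,O_n ∈ R^{q×q} with σσ* ≤ (Σ_i p_i σ_i O_i)(Σ_i p_i σ_i O_i)*, then the law of σZ is dominated in the convex order by the mixture Σ_i p_i L(σ_i Z). -/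
open MeasureTheory ProbabilityTheory Matrix

/-!
Put `A = ∑ pᵢ σᵢ Oᵢ`. Since `σσᵀ ≤ AAᵀ`, Douglas' factorization gives `σ = A K` with `K` a
contraction. Diagonalizing `KᵀK` yields orthonormal bases `v`, `u` with `K vⱼ = cⱼ uⱼ` and
`cⱼ ∈ [0, 1]`; as `[0, 1]^q` lies in the convex hull of the sign vectors `{±1}^q`, `K` is a convex
combination of orthogonal maps, so `σ` is a convex combination of matrices `A O` with `O`
orthogonal. For radial `Z`, `A O Z` has the law of `A Z` and `σᵢ Oᵢ Z` that of `σᵢ Z`, so two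
applications of Jensen's inequality give `E φ(σ Z) ≤ E φ(A Z) ≤ ∑ pᵢ E φ(σᵢ Z)`.
Integrability of `φ(∑ wᵢ Xᵢ)` comes from the sandwich
`2 φ(0) - ∑ wᵢ φ(-Xᵢ) ≤ φ(∑ wᵢ Xᵢ) ≤ ∑ wᵢ φ(Xᵢ)`, whose lower bound is integrable because `-Z`
is again distributed as `Z`.
-/

theorem LinearMap.exists_comp_eq_of_norm_apply_le {𝕜 E F G : Type*} [RCLike 𝕜]
    [NormedAddCommGroup E] [InnerProductSpace 𝕜 E]
    [NormedAddCommGroup F] [InnerProductSpace 𝕜 F] [FiniteDimensional 𝕜 F]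
    [NormedAddCommGroup G] [InnerProductSpace 𝕜 G]
    (T : E →ₗ[𝕜] F) (S : E →ₗ[𝕜] G) (h : ∀ y, ‖S y‖ ≤ ‖T y‖) :
    ∃ L : F →ₗ[𝕜] G, (∀ x, ‖L x‖ ≤ ‖x‖) ∧ L ∘ₗ T = S := by
  have hker : ker T ≤ ker S := fun y hy => by simpa [mem_ker.1 hy] using h y
  set L₀ : range T →ₗ[𝕜] G := (ker T).liftQ S hker ∘ₗ T.quotKerEquivRange.symm.toLinearMap
  have hL₀ : ∀ y, L₀ ⟨T y, mem_range_self T y⟩ = S y := fun y => by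
    simp [L₀, quotKerEquivRange_symm_apply_image]
  refine ⟨L₀ ∘ₗ (range T).orthogonalProjectionOnto.toLinearMap, fun x => ?_, ?_⟩
  · obtain ⟨y, hy⟩ := mem_range.1 ((range T).starProjection_apply_mem x)
    have hPx : (range T).orthogonalProjectionOnto x = ⟨T y, mem_range_self T y⟩ := by
      ext; simp [hy]
    calc ‖L₀ ((range T).orthogonalProjectionOnto x)‖ = ‖S y‖ := by rw [hPx, hL₀]
      _ ≤ ‖T y‖ := h y
      _ = ‖(range T).starProjection x‖ := by rw [hy]
      _ ≤ ‖x‖ := (range T).norm_starProjection_apply_le x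
  · ext y
    have hPy : (range T).orthogonalProjectionOnto (T y) = ⟨T y, mem_range_self T y⟩ :=
      Submodule.orthogonalProjectionOnto_mem_subspace_eq_self (K := range T) ⟨T y, _⟩
    simp [hPy, hL₀]

theorem mem_convexHull_signs {ι : Type*} [Finite ι] {c : ι → ℝ} (hc : ∀ i, |c i| ≤ 1) :
    c ∈ convexHull ℝ {s : ι → ℝ | ∀ i, |s i| = 1} := by
  have hsigns : {s : ι → ℝ | ∀ i, |s i| = 1} = Set.univ.pi fun _ => {-1, 1} := by
    ext s; simp [abs_eq zero_le_one, or_comm]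
  rw [hsigns, convexHull_pi, Set.mem_univ_pi]
  intro i
  rw [convexHull_pair, segment_eq_Icc (by norm_num)]
  exact abs_le.1 (hc i)

open scoped RealInnerProductSpace in
theorem LinearMap.mem_convexHull_isometries_of_norm_apply_le {E : Type*} [NormedAddCommGroup E]
    [InnerProductSpace ℝ E] [FiniteDimensional ℝ E] (T : E →ₗ[ℝ] E) (hT : ∀ x, ‖T x‖ ≤ ‖x‖) :
    T ∈ convexHull ℝ {U : E →ₗ[ℝ] E | ∀ x, ‖U x‖ = ‖x‖} := by
  have hsymm := T.isSymmetric_adjoint_mul_self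
  set v := hsymm.eigenvectorBasis rfl
  set c : Fin (Module.finrank ℝ E) → ℝ := fun j => ‖T (v j)‖
  have horth : ∀ i j, i ≠ j → ⟪T (v i), T (v j)⟫ = 0 := fun i j hij => by
    rw [← adjoint_inner_right, ← Module.End.mul_apply, hsymm.apply_eigenvectorBasis,
      inner_smul_right, v.orthonormal.2 hij, mul_zero]
  set S := {j | T (v j) ≠ 0}
  have hon : Orthonormal ℝ (S.domRestrict fun j => (c j)⁻¹ • T (v j)) := by
    refine ⟨fun j => norm_smul_inv_norm j.2, fun i j hij => ?_⟩
    change ⟪(c i)⁻¹ • T (v i), (c j)⁻¹ • T (v j)⟫ = 0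
    rw [inner_smul_left, inner_smul_right, horth i j (Subtype.coe_ne_coe.2 hij), mul_zero,
      mul_zero]
  obtain ⟨u, hu⟩ := hon.exists_orthonormalBasis_extension_of_card_eq (by simp)
  have hTv : ∀ j, T (v j) = c j • u j := fun j => by
    by_cases hj : T (v j) = 0
    · simp [c, hj]
    · rw [hu j hj, smul_inv_smul₀ (norm_ne_zero_iff.2 hj)]
  set Ψ : (Fin (Module.finrank ℝ E) → ℝ) →ₗ[ℝ] E →ₗ[ℝ] E :=
    (v.repr.symm.toLinearEquiv.arrowCongr u.repr.symm.toLinearEquiv).toLinearMap ∘ₗ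
      toEuclideanLin.toLinearMap ∘ₗ diagonalLinearMap _ ℝ ℝ
  have hΨ : ∀ s j, Ψ s (v j) = s j • u j := fun s j => by
    have hdiag : toEuclideanLin (diagonal s) (EuclideanSpace.single j 1) =
        s j • EuclideanSpace.single j 1 := by
      ext i; simp [toLpLin_apply]
    simp [Ψ, hdiag]
  have hTΨ : T = Ψ c := v.toBasis.ext fun j => by simpa [hΨ] using hTv j
  have hiso : Ψ '' {s | ∀ i, |s i| = 1} ⊆ {U | ∀ x, ‖U x‖ = ‖x‖} := by
    rintro _ ⟨s, hs, rfl⟩ x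
    have hs2 : ∀ i, s i ^ 2 = 1 := fun i => by rw [← sq_abs, hs i, one_pow]
    simp only [Ψ, LinearMap.comp_apply, LinearEquiv.coe_coe, LinearEquiv.arrowCongr_apply]
    rw [LinearIsometryEquiv.coe_toLinearEquiv, LinearIsometryEquiv.norm_map, ← v.repr.norm_map x,
      EuclideanSpace.norm_eq, EuclideanSpace.norm_eq]
    simp [toLpLin_apply, mulVec_diagonal, mul_pow, hs2]
  have hc : ∀ j, |c j| ≤ 1 := fun j => by simpa [c] using hT (v j)
  rw [hTΨ]
  exact convexHull_mono hiso
    (Ψ.image_convexHull _ ▸ Set.mem_image_of_mem Ψ (mem_convexHull_signs hc))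

namespace Matrix

theorem mem_orthogonalGroup_of_norm_toEuclideanLin {n : Type*} [Fintype n] [DecidableEq n]
    {O : Matrix n n ℝ} (hO : ∀ x, ‖toEuclideanLin O x‖ = ‖x‖) : O ∈ orthogonalGroup n ℝ := by
  rw [mem_unitaryGroup_iff']
  apply EquivLike.injective (toEuclideanCLM (𝕜 := ℝ) (n := n))
  rw [map_mul, map_star, map_one, ContinuousLinearMap.star_eq_adjoint]
  exact (ContinuousLinearMap.norm_map_iff_adjoint_comp_self _).1 hO

theorem norm_toEuclideanLin_transpose_sq {m n : Type*} [Fintype m] [DecidableEq m] [Fintype n]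
    (B : Matrix m n ℝ) (y : EuclideanSpace ℝ m) :
    ‖toEuclideanLin Bᵀ y‖ ^ 2 = y.ofLp ⬝ᵥ (B * Bᵀ) *ᵥ y.ofLp := by
  rw [EuclideanSpace.real_norm_sq_eq, ← mulVec_mulVec, dotProduct_mulVec, ← mulVec_transpose]
  simp [toLpLin_apply, dotProduct, sq]

theorem mem_convexHull_mul_orthogonalGroup_of_posSemidef_sub {m n : Type*} [Fintype m]
    [DecidableEq m] [Fintype n] [DecidableEq n] {A σ : Matrix m n ℝ}
    (h : (A * Aᵀ - σ * σᵀ).PosSemidef) :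
    σ ∈ convexHull ℝ ((fun O : Matrix n n ℝ => A * O) '' orthogonalGroup n ℝ) := by
  have hle : ∀ y, ‖toEuclideanLin σᵀ y‖ ≤ ‖toEuclideanLin Aᵀ y‖ := fun y => by
    have := h.dotProduct_mulVec_nonneg y.ofLp
    rw [star_trivial, sub_mulVec, dotProduct_sub, sub_nonneg, ← norm_toEuclideanLin_transpose_sq,
      ← norm_toEuclideanLin_transpose_sq] at this
    exact pow_le_pow_iff_left₀ (norm_nonneg _) (norm_nonneg _) two_ne_zero |>.1 this
  obtain ⟨L, hL, hLA⟩ := LinearMap.exists_comp_eq_of_norm_apply_le _ _ hle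
  set Φ : (EuclideanSpace ℝ n →ₗ[ℝ] EuclideanSpace ℝ n) →ₗ[ℝ] Matrix m n ℝ :=
    mulLeftLinearMap n ℝ A ∘ₗ (transposeLinearEquiv n n ℝ ℝ).toLinearMap ∘ₗ
      toEuclideanLin.symm.toLinearMap
  have hΦL : Φ L = σ := by
    have hLσ : toEuclideanLin.symm L * Aᵀ = σᵀ := toEuclideanLin.injective (by simpa using hLA)
    change A * (toEuclideanLin.symm L)ᵀ = σ
    rw [← transpose_transpose σ, ← hLσ, transpose_mul, transpose_transpose]
  have hΦ : Φ '' {U | ∀ x, ‖U x‖ = ‖x‖} ⊆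
      (fun O : Matrix n n ℝ => A * O) '' orthogonalGroup n ℝ := by
    rintro _ ⟨U, hU, rfl⟩
    refine ⟨_, Unitary.star_mem (mem_orthogonalGroup_of_norm_toEuclideanLin
      (O := toEuclideanLin.symm U) (by simpa using hU)), ?_⟩
    simp [Φ, star_eq_conjTranspose]
  rw [← hΦL]
  exact convexHull_mono hΦ (Φ.image_convexHull _ ▸
    Set.mem_image_of_mem Φ (L.mem_convexHull_isometries_of_norm_apply_le hL))

end Matrix

section Jensen

variable {Ω : Type*} [MeasurableSpace Ω] {μ : Measure Ω} [IsFiniteMeasure μ]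
  {E : Type*} [NormedAddCommGroup E] [NormedSpace ℝ E] {φ : E → ℝ}
  {ι : Type*} [Fintype ι] {w : ι → ℝ} {X : ι → Ω → E}

theorem ConvexOn.integrable_comp_sum_smul (hφ : ConvexOn ℝ Set.univ φ) (hφc : Continuous φ)
    (hw₀ : ∀ i, 0 ≤ w i) (hw₁ : ∑ i, w i = 1) (hX : ∀ i, AEStronglyMeasurable (X i) μ)
    (hint : ∀ i, Integrable (fun ω => φ (X i ω)) μ)
    (hint_neg : ∀ i, Integrable (fun ω => φ (-X i ω)) μ) :
    Integrable (fun ω => φ (∑ i, w i • X i ω)) μ := by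
  have hle : ∀ x : ι → E, φ (∑ i, w i • x i) ≤ ∑ i, w i * φ (x i) := fun x =>
    hφ.map_sum_le (fun i _ => hw₀ i) hw₁ fun i _ => Set.mem_univ _
  have hmid : ∀ y, 2 * φ 0 - φ (-y) ≤ φ y := fun y => by
    have := hφ.2 (Set.mem_univ y) (Set.mem_univ (-y)) (by norm_num : (0 : ℝ) ≤ 1 / 2)
      (by norm_num : (0 : ℝ) ≤ 1 / 2) (by norm_num)
    simp only [smul_neg, add_neg_cancel, smul_eq_mul] at this
    linarith
  refine integrable_of_le_of_le (g₁ := fun ω => 2 * φ 0 - ∑ i, w i * φ (-X i ω))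
    (g₂ := fun ω => ∑ i, w i * φ (X i ω))
    (hφc.comp_aestronglyMeasurable
      (Finset.aestronglyMeasurable_fun_sum _ fun i _ => (hX i).const_smul _))
    (Filter.Eventually.of_forall fun ω => ?_) (Filter.Eventually.of_forall fun ω => hle _)
    ((integrable_const _).sub (integrable_finsetSum _ fun i _ => (hint_neg i).const_mul _))
    (integrable_finsetSum _ fun i _ => (hint i).const_mul _)
  have := hle fun i => -X i ω
  simp only [smul_neg, Finset.sum_neg_distrib] at this
  linarith [hmid (∑ i, w i • X i ω)]

theorem ConvexOn.integral_comp_sum_smul_le (hφ : ConvexOn ℝ Set.univ φ) (hφc : Continuous φ)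
    (hw₀ : ∀ i, 0 ≤ w i) (hw₁ : ∑ i, w i = 1) (hX : ∀ i, AEStronglyMeasurable (X i) μ)
    (hint : ∀ i, Integrable (fun ω => φ (X i ω)) μ)
    (hint_neg : ∀ i, Integrable (fun ω => φ (-X i ω)) μ) :
    ∫ ω, φ (∑ i, w i • X i ω) ∂μ ≤ ∑ i, w i * ∫ ω, φ (X i ω) ∂μ := by
  calc ∫ ω, φ (∑ i, w i • X i ω) ∂μ ≤ ∫ ω, ∑ i, w i * φ (X i ω) ∂μ :=
        integral_mono (hφ.integrable_comp_sum_smul hφc hw₀ hw₁ hX hint hint_neg)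
          (integrable_finsetSum _ fun i _ => (hint i).const_mul _)
          fun ω => hφ.map_sum_le (fun i _ => hw₀ i) hw₁ fun i _ => Set.mem_univ _
    _ = ∑ i, w i * ∫ ω, φ (X i ω) ∂μ := by
        rw [integral_finsetSum _ fun i _ => (hint i).const_mul _]
        simp only [integral_const_mul]

end Jensen

section Radial

variable {Ω : Type*} [MeasurableSpace Ω] {μ : Measure Ω}

def IsRadial {n : Type*} [Fintype n] [DecidableEq n] (Z : Ω → n → ℝ) (μ : Measure Ω) : Prop :=
  ∀ O ∈ orthogonalGroup n ℝ, IdentDistrib (fun ω => O *ᵥ Z ω) Z μ μ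

variable {m n : Type*} [Fintype m] [Fintype n] [DecidableEq n] {Z : Ω → n → ℝ}

theorem IsRadial.identDistrib_mul_mulVec (hZ : IsRadial Z μ) (B : Matrix m n ℝ)
    {O : Matrix n n ℝ} (hO : O ∈ orthogonalGroup n ℝ) :
    IdentDistrib (fun ω => (B * O) *ᵥ Z ω) (fun ω => B *ᵥ Z ω) μ μ := by
  simpa [Function.comp_def, mulVec_mulVec] using (hZ O hO).comp (u := (B *ᵥ ·)) (by fun_prop)

theorem IsRadial.integrable_and_integral_comp_sum_mulVec_le [IsFiniteMeasure μ]
    (hZ : IsRadial Z μ) {φ : (m → ℝ) → ℝ} (hφ : ConvexOn ℝ Set.univ φ) (hφc : Continuous φ)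
    {ι : Type*} [Fintype ι] {w : ι → ℝ} (hw₀ : ∀ i, 0 ≤ w i) (hw₁ : ∑ i, w i = 1)
    (B : ι → Matrix m n ℝ) {O : ι → Matrix n n ℝ} (hO : ∀ i, O i ∈ orthogonalGroup n ℝ)
    (hint : ∀ i, Integrable (fun ω => φ (B i *ᵥ Z ω)) μ) :
    Integrable (fun ω => φ ((∑ i, w i • (B i * O i)) *ᵥ Z ω)) μ ∧
      ∫ ω, φ ((∑ i, w i • (B i * O i)) *ᵥ Z ω) ∂μ ≤ ∑ i, w i * ∫ ω, φ (B i *ᵥ Z ω) ∂μ := by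
  have hneg : ∀ i, -O i ∈ orthogonalGroup n ℝ := fun i => by
    simpa [mem_orthogonalGroup_iff] using hO i
  have hid := fun i => (hZ.identDistrib_mul_mulVec (B i) (hO i)).comp hφc.measurable
  have hid_neg := fun i => (hZ.identDistrib_mul_mulVec (B i) (hneg i)).comp hφc.measurable
  have hX : ∀ i, AEStronglyMeasurable (fun ω => (B i * O i) *ᵥ Z ω) μ := fun i =>
    (hZ.identDistrib_mul_mulVec (B i) (hO i)).aemeasurable_fst.aestronglyMeasurable
  have hint' : ∀ i, Integrable (fun ω => φ ((B i * O i) *ᵥ Z ω)) μ := fun i =>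
    (hid i).integrable_iff.2 (hint i)
  have hint_neg : ∀ i, Integrable (fun ω => φ (-((B i * O i) *ᵥ Z ω))) μ := fun i => by
    simpa [Function.comp_def, mul_neg, neg_mulVec] using (hid_neg i).integrable_iff.2 (hint i)
  have hint_eq : ∀ i, ∫ ω, φ ((B i * O i) *ᵥ Z ω) ∂μ = ∫ ω, φ (B i *ᵥ Z ω) ∂μ := fun i =>
    (hid i).integral_eq
  have hsum : ∀ z, (∑ i, w i • (B i * O i)) *ᵥ z = ∑ i, w i • ((B i * O i) *ᵥ z) := fun z => by
    simp [sum_mulVec, smul_mulVec]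
  simp only [hsum]
  refine ⟨hφ.integrable_comp_sum_smul hφc hw₀ hw₁ hX hint' hint_neg, ?_⟩
  simpa only [hint_eq] using hφ.integral_comp_sum_smul_le hφc hw₀ hw₁ hX hint' hint_neg

theorem IsRadial.integrable_and_integral_comp_mulVec_le_of_mem_convexHull [IsFiniteMeasure μ]
    (hZ : IsRadial Z μ) {φ : (m → ℝ) → ℝ} (hφ : ConvexOn ℝ Set.univ φ) (hφc : Continuous φ)
    {B C : Matrix m n ℝ}
    (hC : C ∈ convexHull ℝ ((fun O : Matrix n n ℝ => B * O) '' orthogonalGroup n ℝ))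
    (hint : Integrable (fun ω => φ (B *ᵥ Z ω)) μ) :
    Integrable (fun ω => φ (C *ᵥ Z ω)) μ ∧ ∫ ω, φ (C *ᵥ Z ω) ∂μ ≤ ∫ ω, φ (B *ᵥ Z ω) ∂μ := by
  obtain ⟨ι, _, w, C', hw₀, hw₁, hC', rfl⟩ := mem_convexHull_iff_exists_fintype.1 hC
  choose O hO hBO using hC'
  simp only [← hBO]
  simpa [← Finset.sum_mul, hw₁] using
    hZ.integrable_and_integral_comp_sum_mulVec_le hφ hφc hw₀ hw₁ (fun _ => B) hO fun _ => hint

end Radial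

section Mixture

variable {α ι : Type*} [MeasurableSpace α] [Fintype ι] {ν : ι → Measure α} {p : ι → ℝ}
  {f : α → ℝ}

theorem MeasureTheory.Integrable.of_sum_ofReal_smul_measure (hp : ∀ i, 0 < p i)
    (hf : Integrable f (∑ i, ENNReal.ofReal (p i) • ν i)) (i : ι) : Integrable f (ν i) :=
  (integrable_smul_measure (by simpa using hp i) ENNReal.ofReal_ne_top).1
    (integrable_finsetSum_measure.1 hf i (Finset.mem_univ i))

theorem integral_sum_ofReal_smul_measure (hp : ∀ i, 0 ≤ p i) (hf : ∀ i, Integrable f (ν i)) :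
    ∫ x, f x ∂(∑ i, ENNReal.ofReal (p i) • ν i) = ∑ i, p i * ∫ x, f x ∂ν i := by
  rw [integral_finsetSum_measure fun i _ => (hf i).smul_measure ENNReal.ofReal_ne_top]
  simp [integral_smul_measure, ENNReal.toReal_ofReal (hp _)]

end Mixture

theorem stmt13_general {q d n : ℕ} {Ω : Type*} [MeasurableSpace Ω] (μ : Measure Ω)
    [IsProbabilityMeasure μ] (Z : Ω → Fin q → ℝ) (hZmeas : Measurable Z)
    (hrad : ∀ O : Matrix (Fin q) (Fin q) ℝ, O * Oᵀ = 1 →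
      Measure.map (fun ω => O.mulVec (Z ω)) μ = Measure.map Z μ)
    (σ : Matrix (Fin d) (Fin q) ℝ) (σs : Fin n → Matrix (Fin d) (Fin q) ℝ)
    (p : Fin n → ℝ) (hp : ∀ i, p i ∈ Set.Ioo (0:ℝ) 1) (hp1 : ∑ i, p i = 1)
    (h : ∃ O : Fin n → Matrix (Fin q) (Fin q) ℝ, (∀ i, O i * (O i)ᵀ = 1) ∧
      ((∑ i, p i • (σs i * O i)) * (∑ i, p i • (σs i * O i))ᵀ - σ * σᵀ).PosSemidef) :
    ConvexOrder (Measure.map (fun ω => σ.mulVec (Z ω)) μ)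
      (∑ i, ENNReal.ofReal (p i) • Measure.map (fun ω => (σs i).mulVec (Z ω)) μ) := by
  obtain ⟨O, hO, hpsd⟩ := h
  intro φ hφ _ hint
  have hφc : Continuous φ := continuousOn_univ.1 (hφ.continuousOn isOpen_univ)
  have hZ : IsRadial Z μ := fun O hO' =>
    ⟨by fun_prop, hZmeas.aemeasurable, hrad O ((mem_orthogonalGroup_iff _ _).1 hO')⟩
  have hmap : ∀ B : Matrix (Fin d) (Fin q) ℝ, ∫ x, φ x ∂(μ.map fun ω => B *ᵥ Z ω) =
      ∫ ω, φ (B *ᵥ Z ω) ∂μ := fun B => integral_map (by fun_prop) hφc.aestronglyMeasurable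
  have hint_map := hint.of_sum_ofReal_smul_measure fun i => (hp i).1
  have hint_σs : ∀ i, Integrable (fun ω => φ (σs i *ᵥ Z ω)) μ := fun i =>
    (integrable_map_measure hφc.aestronglyMeasurable (by fun_prop)).1 (hint_map i)
  obtain ⟨hintA, hA⟩ := hZ.integrable_and_integral_comp_sum_mulVec_le hφ hφc
    (fun i => (hp i).1.le) hp1 σs (fun i => (mem_orthogonalGroup_iff _ _).2 (hO i)) hint_σs
  obtain ⟨-, hσ⟩ := hZ.integrable_and_integral_comp_mulVec_le_of_mem_convexHull hφ hφc
    (mem_convexHull_mul_orthogonalGroup_of_posSemidef_sub hpsd) hintA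
  rw [integral_sum_ofReal_smul_measure (fun i => (hp i).1.le) hint_map, hmap]
  simpa only [hmap] using hσ.trans hA

theorem stmt13 {q d n : ℕ} (hn : 2 ≤ n) {Ω : Type*} [MeasurableSpace Ω] (μ : Measure Ω)
    [IsProbabilityMeasure μ] (Z : Ω → Fin q → ℝ) (hZmeas : Measurable Z)
    (hZint : Integrable Z μ)
    (hrad : ∀ O : Matrix (Fin q) (Fin q) ℝ, O * Oᵀ = 1 →
      Measure.map (fun ω => O.mulVec (Z ω)) μ = Measure.map Z μ)
    (σ : Matrix (Fin d) (Fin q) ℝ) (σs : Fin n → Matrix (Fin d) (Fin q) ℝ)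
    (p : Fin n → ℝ) (hp : ∀ i, p i ∈ Set.Ioo (0:ℝ) 1) (hp1 : ∑ i, p i = 1)
    (h : ∃ O : Fin n → Matrix (Fin q) (Fin q) ℝ, (∀ i, O i * (O i)ᵀ = 1) ∧
      ((∑ i, p i • (σs i * O i)) * (∑ i, p i • (σs i * O i))ᵀ - σ * σᵀ).PosSemidef) :
    ConvexOrder (Measure.map (fun ω => σ.mulVec (Z ω)) μ)
      (∑ i, ENNReal.ofReal (p i) • Measure.map (fun ω => (σs i).mulVec (Z ω)) μ) :=
  stmt13_general μ Z hZmeas hrad σ σs p hp hp1 h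
end
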